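/- arXiv:2603.03281 — 2 statements merged into one kernel-verified Lean document; each statement's English description precedes it below -/
import Mathlib

section
/- Let s : ℝ → ℝ^d be differentiable with s(0) ≠ 0. Suppose there exists η > 0 such that for all t ≥ 0 with s(t) ≠ 0, ⟪s(t), s'(t)⟫ ≤ -η * ‖s(t)‖. Then there exists T ≤ ‖s(0)‖ / η such that s(T) = 0. -/
/-! Away from zeros of `s`, `‖s‖' = ⟪s, s'⟫ / ‖s‖ ≤ -η`, so `‖s t‖ + η t` is nonincreasing. If `s` had
no zero on `[0, ‖s 0‖ / η]`, this would give `‖s (‖s 0‖ / η)‖ ≤ ‖s 0‖ - η (‖s 0‖ / η) = 0`. -/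

open RealInnerProductSpace Set

variable {E : Type*} [NormedAddCommGroup E] [InnerProductSpace ℝ E]

theorem HasDerivAt.norm_of_ne_zero {f : ℝ → E} {f' : E} {t : ℝ} (hf : HasDerivAt f f' t)
    (h0 : f t ≠ 0) : HasDerivAt (‖f ·‖) (⟪f t, f'⟫ / ‖f t‖) t := by
  have hsqrt := hf.norm_sq.sqrt (by simpa using h0)
  simp only [Real.sqrt_sq (norm_nonneg _)] at hsqrt
  convert hsqrt using 1
  field_simp

theorem antitoneOn_norm_add_mul_of_inner_le {f f' : ℝ → E} {a b η : ℝ}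
    (hcont : ContinuousOn f (Icc a b)) (hderiv : ∀ t ∈ Ioo a b, HasDerivAt f (f' t) t)
    (hne : ∀ t ∈ Ioo a b, f t ≠ 0) (hdecay : ∀ t ∈ Ioo a b, ⟪f t, f' t⟫ ≤ -η * ‖f t‖) :
    AntitoneOn (fun t => ‖f t‖ + η * t) (Icc a b) := by
  refine antitoneOn_of_hasDerivWithinAt_nonpos (convex_Icc a b)
    (hcont.norm.add (continuousOn_const.mul continuousOn_id))
    (f' := fun t => ⟪f t, f' t⟫ / ‖f t‖ + η) ?_ ?_ <;> rw [interior_Icc] <;> intro t ht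
  · simpa only [mul_one] using (((hderiv t ht).norm_of_ne_zero (hne t ht)).fun_add
      ((hasDerivAt_id' t).const_mul η)).hasDerivWithinAt
  · have hpos : 0 < ‖f t‖ := norm_pos_iff.mpr (hne t ht)
    have : ⟪f t, f' t⟫ / ‖f t‖ ≤ -η := (div_le_iff₀ hpos).mpr (hdecay t ht)
    linarith

theorem stmt_1_general {d : ℕ} (s : ℝ → EuclideanSpace ℝ (Fin d)) (hs : Differentiable ℝ s)
    (η : ℝ) (hη : 0 < η)
    (hdecay : ∀ t : ℝ, 0 ≤ t → s t ≠ 0 → ⟪s t, deriv s t⟫ ≤ -η * ‖s t‖) :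
    ∃ T : ℝ, T ≤ ‖s 0‖ / η ∧ s T = 0 := by
  by_contra! hnz
  set T := ‖s 0‖ / η
  have hT : 0 ≤ T := by positivity
  have hanti : AntitoneOn (fun t => ‖s t‖ + η * t) (Icc 0 T) :=
    antitoneOn_norm_add_mul_of_inner_le hs.continuous.continuousOn
      (fun t _ => (hs t).hasDerivAt) (fun t ht => hnz t ht.2.le)
      (fun t ht => hdecay t ht.1.le (hnz t ht.2.le))
  have hle := hanti (left_mem_Icc.mpr hT) (right_mem_Icc.mpr hT) hT
  have hηT : η * T = ‖s 0‖ := mul_div_cancel₀ _ hη.ne'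
  simp only [mul_zero, add_zero, hηT] at hle
  exact hnz T le_rfl (norm_le_zero_iff.mp (by linarith))

theorem stmt_1 {d : ℕ} (s : ℝ → EuclideanSpace ℝ (Fin d)) (hs : Differentiable ℝ s)
    (h0 : s 0 ≠ 0) (η : ℝ) (hη : 0 < η)
    (hdecay : ∀ t : ℝ, 0 ≤ t → s t ≠ 0 → ⟪s t, deriv s t⟫ ≤ -η * ‖s t‖) :
    ∃ T : ℝ, T ≤ ‖s 0‖ / η ∧ s T = 0 :=
  stmt_1_general s hs η hη hdecay
end

section
/- Let Γ = w • I + ΔΓ be a linear operator on ℝ^D with ‖ΔΓ‖ (operator norm) ≤ ρ and w > ρ√D. For s ≠ 0, with control Δe = -k • sgn(s) (componentwise sign, so ‖sgn(s)‖₂ ≤ √D and ⟪s, sgn(s)⟫ = ‖s‖₁), one has ⟪s, Γ Δe⟫ ≤ -w k ‖s‖₁ + k ρ √D ‖s‖₂ ≤ -k(w - ρ√D)‖s‖₂. -/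
/-! The nominal gain contributes `-w k ⟪s, sgn s⟫ = -w k ‖s‖₁`, while Cauchy–Schwarz together with
`‖sgn s‖₂ ≤ √D` bounds the contribution of the perturbation `ΔΓ` by `k ρ √D ‖s‖₂`.
The second inequality is then `‖s‖₂ ≤ ‖s‖₁`. -/

open RealInnerProductSpace

noncomputable def sgnVec {D : ℕ} (s : EuclideanSpace ℝ (Fin D)) : EuclideanSpace ℝ (Fin D) :=
  (EuclideanSpace.equiv (Fin D) ℝ).symm (fun i => Real.sign (s i))

namespace Real

lemma sign_mul_self (x : ℝ) : sign x * x = |x| := by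
  rcases lt_trichotomy x 0 with h | rfl | h
  · rw [sign_of_neg h, abs_of_neg h, neg_one_mul]
  · simp
  · rw [sign_of_pos h, abs_of_pos h, one_mul]

lemma abs_sign_le_one (x : ℝ) : |sign x| ≤ 1 := by
  rcases sign_apply_eq x with h | h | h <;> simp [h]

end Real

namespace EuclideanSpace

variable {ι : Type*} [Fintype ι]

lemma norm_le_sum_abs (x : EuclideanSpace ℝ ι) : ‖x‖ ≤ ∑ i, |x i| := by
  rw [norm_eq, Real.sqrt_le_left (Finset.sum_nonneg fun i _ => abs_nonneg (x i))]
  simpa only [Real.norm_eq_abs, sq_abs] using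
    Finset.sum_sq_le_sq_sum_of_nonneg (s := Finset.univ) fun i _ => abs_nonneg (x i)

lemma norm_le_sqrt_card {x : EuclideanSpace ℝ ι} (hx : ∀ i, |x i| ≤ 1) :
    ‖x‖ ≤ √(Fintype.card ι) := by
  rw [norm_eq, Real.sqrt_le_sqrt_iff (Nat.cast_nonneg _)]
  calc ∑ i, ‖x i‖ ^ 2 ≤ ∑ _i : ι, (1 : ℝ) :=
        Finset.sum_le_sum fun i _ => by
          rw [Real.norm_eq_abs]
          exact pow_le_one₀ (abs_nonneg _) (hx i)
    _ = Fintype.card ι := by simp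

end EuclideanSpace

lemma sgnVec_apply {D : ℕ} (s : EuclideanSpace ℝ (Fin D)) (i : Fin D) :
    sgnVec s i = Real.sign (s i) :=
  rfl

lemma inner_sgnVec {D : ℕ} (s : EuclideanSpace ℝ (Fin D)) : ⟪s, sgnVec s⟫ = ∑ i, |s i| := by
  simp [PiLp.inner_apply, sgnVec_apply, Real.sign_mul_self]

lemma norm_sgnVec_le {D : ℕ} (s : EuclideanSpace ℝ (Fin D)) : ‖sgnVec s‖ ≤ √D := by
  simpa only [Fintype.card_fin] using
    EuclideanSpace.norm_le_sqrt_card fun i => (Real.abs_sign_le_one (s i) : |sgnVec s i| ≤ 1)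

lemma inner_smul_id_add_apply_neg_smul_le {E : Type*} [NormedAddCommGroup E]
    [InnerProductSpace ℝ E] (A : E →L[ℝ] E) {w ρ k c : ℝ} (hA : ‖A‖ ≤ ρ) (hk : 0 ≤ k)
    (s : E) {v : E} (hv : ‖v‖ ≤ c) :
    ⟪s, (w • ContinuousLinearMap.id ℝ E + A) ((-k) • v)⟫ ≤
      -(w * k * ⟪s, v⟫) + k * ρ * c * ‖s‖ := by
  have hAv : -(‖s‖ * (ρ * c)) ≤ ⟪s, A v⟫ :=
    neg_le_of_abs_le <| (abs_real_inner_le_norm s (A v)).trans <|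
      mul_le_mul_of_nonneg_left (A.le_of_opNorm_le_of_le hA hv) (norm_nonneg s)
  simp only [map_smul, add_apply, smul_apply, ContinuousLinearMap.id_apply,
    real_inner_smul_right, inner_add_right]
  linarith [mul_le_mul_of_nonneg_left hAv hk]

theorem stmt_7_general {D : ℕ} (ΔΓ : EuclideanSpace ℝ (Fin D) →L[ℝ] EuclideanSpace ℝ (Fin D))
    (w ρ k : ℝ) (hΔΓ : ‖ΔΓ‖ ≤ ρ) (hw : ρ * Real.sqrt D < w) (hk : 0 < k)
    (s : EuclideanSpace ℝ (Fin D)) :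
    let Γ := w • ContinuousLinearMap.id ℝ (EuclideanSpace ℝ (Fin D)) + ΔΓ
    ⟪s, Γ ((-k) • sgnVec s)⟫ ≤ -(w * k * ∑ i, |s i|) + k * ρ * Real.sqrt D * ‖s‖ ∧
    -(w * k * ∑ i, |s i|) + k * ρ * Real.sqrt D * ‖s‖ ≤ -(k * (w - ρ * Real.sqrt D) * ‖s‖) := by
  intro Γ
  have hw₀ : 0 ≤ w := (mul_nonneg ((norm_nonneg _).trans hΔΓ) (Real.sqrt_nonneg _)).trans hw.le
  refine ⟨?_, ?_⟩
  · simpa only [inner_sgnVec] using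
      inner_smul_id_add_apply_neg_smul_le ΔΓ hΔΓ hk.le s (norm_sgnVec_le s)
  · linarith [mul_le_mul_of_nonneg_left (EuclideanSpace.norm_le_sum_abs s)
      (mul_nonneg hw₀ hk.le)]

theorem stmt_7 {D : ℕ} (ΔΓ : EuclideanSpace ℝ (Fin D) →L[ℝ] EuclideanSpace ℝ (Fin D))
    (w ρ k : ℝ) (hΔΓ : ‖ΔΓ‖ ≤ ρ) (hw : ρ * Real.sqrt D < w) (hk : 0 < k)
    (s : EuclideanSpace ℝ (Fin D)) (hs : s ≠ 0) :
    let Γ := w • ContinuousLinearMap.id ℝ (EuclideanSpace ℝ (Fin D)) + ΔΓ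
    ⟪s, Γ ((-k) • sgnVec s)⟫ ≤ -(w * k * ∑ i, |s i|) + k * ρ * Real.sqrt D * ‖s‖ ∧
    -(w * k * ∑ i, |s i|) + k * ρ * Real.sqrt D * ‖s‖ ≤ -(k * (w - ρ * Real.sqrt D) * ‖s‖) :=
  stmt_7_general ΔΓ w ρ k hΔΓ hw hk s
end
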